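/- Let p be a prime and let G₁, G₂, G_T be vector spaces over ℤ/pℤ (G_T written additively), and let e : G₁ → G₂ → G_T be a bilinear map (linear in each argument over ℤ/pℤ). Let N be a natural number, A, Γ, C : Fin N → G₁, B : Fin N → G₂, and α ∈ G₁, β, γ, δ ∈ G₂. Suppose there exists an index j < N for which the individual verification equation fails, i.e. e(A_j, B_j) ≠ e(α, β) + e(Γ_j, γ) + e(C_j, δ). Then the number of coefficient vectors m ∈ (ℤ/pℤ)^N for which the batched equation ∑_{i<N} e(m_i • A_i, B_i) = e((∑_{i<N} m_i) • α, β) + e(∑_{i<N} m_i • Γ_i, γ) + e(∑_{i<N} m_i • C_i, δ) holds is at most p^{N−1}. -/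
import Mathlib


/-- Batch-Soundness for Groth16: if some individual verification equation fails,
then the number of coefficient vectors `m ∈ (ℤ/pℤ)^N` for which the batched
equation holds is at most `p ^ (N - 1)`. -/
theorem groth16_batch_soundness (p : ℕ) [Fact p.Prime]
    (G₁ G₂ GT : Type*) [AddCommGroup G₁] [AddCommGroup G₂] [AddCommGroup GT]
    [Module (ZMod p) G₁] [Module (ZMod p) G₂] [Module (ZMod p) GT]
    (e : G₁ →ₗ[ZMod p] G₂ →ₗ[ZMod p] GT)
    (N : ℕ) (A Γ C : Fin N → G₁) (B : Fin N → G₂) (α : G₁) (β γ δ : G₂)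
    (h : ∃ j, e (A j) (B j) ≠ e α β + e (Γ j) γ + e (C j) δ) :
    Nat.card {m : Fin N → ZMod p //
        ∑ i, e (m i • A i) (B i) =
          e ((∑ i, m i) • α) β + e (∑ i, m i • Γ i) γ + e (∑ i, m i • C i) δ} ≤
      p ^ (N - 1) := by
  obtain ⟨j, hj⟩ := h
  set v : Fin N → GT := fun i => e (A i) (B i) - (e α β + e (Γ i) γ + e (C i) δ) with hv
  have hvj : v j ≠ 0 := sub_ne_zero.mpr hj
  have key : ∀ m : Fin N → ZMod p,
      (∑ i, e (m i • A i) (B i) =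
        e ((∑ i, m i) • α) β + e (∑ i, m i • Γ i) γ + e (∑ i, m i • C i) δ)
      ↔ ∑ i, m i • v i = 0 := by
    intro m
    rw [← sub_eq_zero]
    have hrw : (∑ i, e (m i • A i) (B i)) -
        (e ((∑ i, m i) • α) β + e (∑ i, m i • Γ i) γ + e (∑ i, m i • C i) δ)
        = ∑ i, m i • v i := by
      simp only [hv, smul_sub, smul_add, map_smul, LinearMap.smul_apply, map_sum,
        LinearMap.sum_apply, Finset.sum_smul, Finset.sum_sub_distrib,
        Finset.sum_add_distrib]
    rw [hrw]
  -- restriction map to the coordinates ≠ j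
  set S := {m : Fin N → ZMod p //
      ∑ i, e (m i • A i) (B i) =
        e ((∑ i, m i) • α) β + e (∑ i, m i • Γ i) γ + e (∑ i, m i • C i) δ}
  let f : S → ({i : Fin N // i ≠ j} → ZMod p) := fun m i => m.1 i.1
  have hf : Function.Injective f := by
    rintro ⟨m, hm⟩ ⟨m', hm'⟩ hmm
    have heq : ∀ i : Fin N, i ≠ j → m i = m' i := by
      intro i hi
      exact congrFun hmm ⟨i, hi⟩
    rw [key] at hm hm'
    have hsplit : ∀ w : Fin N → ZMod p,
        ∑ i, w i • v i = w j • v j + ∑ i ∈ Finset.univ.erase j, w i • v i := by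
      intro w
      exact (Finset.add_sum_erase _ (fun i => w i • v i) (Finset.mem_univ j)).symm
    have hrest : ∑ i ∈ Finset.univ.erase j, m i • v i
        = ∑ i ∈ Finset.univ.erase j, m' i • v i := by
      refine Finset.sum_congr rfl fun i hi => ?_
      rw [heq i (Finset.ne_of_mem_erase hi)]
    have : m j • v j = m' j • v j := by
      have h1 := hsplit m
      have h2 := hsplit m'
      rw [hm] at h1; rw [hm'] at h2
      rw [hrest] at h1
      have := h1.symm.trans h2
      exact add_right_cancel (by linear_combination (norm := abel) this)
    have hjj : m j = m' j := by
      have h0 : (m j - m' j) • v j = 0 := by rw [sub_smul, this, sub_self]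
      rcases smul_eq_zero.mp h0 with h' | h'
      · exact sub_eq_zero.mp h'
      · exact absurd h' hvj
    refine Subtype.ext (funext fun i => ?_)
    by_cases hij : i = j
    · subst hij; exact hjj
    · exact heq i hij
  calc Nat.card S ≤ Nat.card ({i : Fin N // i ≠ j} → ZMod p) :=
        Nat.card_le_card_of_injective f hf
    _ = p ^ (N - 1) := by
        rw [Nat.card_eq_fintype_card, Fintype.card_fun, ZMod.card]
        congr 1
        simp [Fintype.card_subtype_compl]
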